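/- Let b ∈ C with b ≠ 0 and q(b) = 0. For any two type-2 vertex lattices Λ and Λ', there exist finite sequences Λ = M₀, M₁, …, M_s and Λ' = M'₀, M'₁, …, M'_t of type-2 vertex lattices, with consecutive terms adjacent, such that n(b, M_{i+1}) = n(b, M_i) + 1 for all 0 ≤ i < s, n(b, M'_{j+1}) = n(b, M'_j) + 1 for all 0 ≤ j < t, and M_s = M'_t (any two ascending geodesics for b coincide after finitely many steps). -/

import Mathlib

noncomputable section

attribute [local instance] Classical.propDecidable

variable {F : Type} [Field F]

/-- Membership in the valuation ring `O_F = {x : F | x = 0 ∨ v x ≥ 0}`. -/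
def inO (v : F → ℤ) (x : F) : Prop := x = 0 ∨ 0 ≤ v x

/-- The Hermitian form `h(x, y) = x₁ · σ(y₂) + x₂ · σ(y₁)` on `C = F²`. -/
def herm (σ : F →+* F) (x y : F × F) : F := x.1 * σ y.2 + x.2 * σ y.1

/-- The `O_F`-span of two vectors of `C = F²`. -/
def spanL (v : F → ℤ) (u w : F × F) : Set (F × F) :=
  {x | ∃ a b : F, inO v a ∧ inO v b ∧ x = a • u + b • w}

/-- An `O_F`-lattice in `C`: a free rank-2 `O_F`-submodule spanning `C` over `F`. -/
def IsLattice (v : F → ℤ) (Λ : Set (F × F)) : Prop :=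
  ∃ u w : F × F, LinearIndependent F ![u, w] ∧ Λ = spanL v u w

/-- The dual lattice `Λ^♯ = {x ∈ C | h(x, Λ) ⊆ O_F}`. -/
def dualL (σ : F →+* F) (v : F → ℤ) (Λ : Set (F × F)) : Set (F × F) :=
  {x | ∀ y ∈ Λ, inO v (herm σ x y)}

/-- A vertex lattice of type 0: a self-dual lattice. -/
def IsVertex0 (σ : F →+* F) (v : F → ℤ) (Λ : Set (F × F)) : Prop :=
  IsLattice v Λ ∧ dualL σ v Λ = Λ

/-- A vertex lattice of type 2: a lattice with `Λ^♯ = π Λ`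
(equivalently `πΛ ⊆ Λ^♯ ⊆ Λ` with `Λ/Λ^♯` two-dimensional over the residue field). -/
def IsVertex2 (σ : F →+* F) (π : F) (v : F → ℤ) (Λ : Set (F × F)) : Prop :=
  IsLattice v Λ ∧ dualL σ v Λ = (fun x => π • x) '' Λ

/-- A vertex lattice (of type 0 or type 2). -/
def IsVertex (σ : F →+* F) (π : F) (v : F → ℤ) (Λ : Set (F × F)) : Prop :=
  IsVertex0 σ v Λ ∨ IsVertex2 σ π v Λ

/-- `nIs π b Λ n` says that `n = n(b, Λ)` is the largest integer `m` with `π⁻ᵐ b ∈ Λ`. -/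
def nIs (π : F) (b : F × F) (Λ : Set (F × F)) (n : ℤ) : Prop :=
  IsGreatest {m : ℤ | (π ^ (-m)) • b ∈ Λ} n

/-- Adjacency of type-2 vertex lattices: distinct, with intersection a type-0 vertex lattice. -/
def AdjV (σ : F →+* F) (π : F) (v : F → ℤ) (Λ Λ' : Set (F × F)) : Prop :=
  IsVertex2 σ π v Λ ∧ IsVertex2 σ π v Λ' ∧ Λ ≠ Λ' ∧ IsVertex0 σ v (Λ ∩ Λ')

/-- There is a walk of length `k` between `Λ` and `Λ'` in the Bruhat–Tits tree. -/
def WalkN (σ : F →+* F) (π : F) (v : F → ℤ) (k : ℕ) (Λ Λ' : Set (F × F)) : Prop :=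
  ∃ f : ℕ → Set (F × F), f 0 = Λ ∧ f k = Λ' ∧ ∀ i < k, AdjV σ π v (f i) (f (i + 1))

/-- `dGIs σ π v Λ Λ' k` : the graph distance `d_G(Λ, Λ')` equals `k`. -/
def dGIs (σ : F →+* F) (π : F) (v : F → ℤ) (Λ Λ' : Set (F × F)) (k : ℕ) : Prop :=
  IsLeast {j : ℕ | WalkN σ π v j Λ Λ'} k

/-- `P` is a type-2 "hull" of the vertex lattice `Λ`: `P = Λ` when `Λ` has type 2,
and `P` is a type-2 vertex lattice containing `Λ` when `Λ` has type 0. -/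
def HullOf (σ : F →+* F) (π : F) (v : F → ℤ) (Λ P : Set (F × F)) : Prop :=
  (IsVertex2 σ π v Λ ∧ P = Λ) ∨ (IsVertex0 σ v Λ ∧ IsVertex2 σ π v P ∧ Λ ⊆ P)

/-- `DTwice σ π v Λ Λ' m` : twice the tree distance `D(Λ, Λ')` equals `m`
(type-0 vertex lattices are midpoints of edges, contributing `1/2` each). -/
def DTwice (σ : F →+* F) (π : F) (v : F → ℤ) (Λ Λ' : Set (F × F)) (m : ℕ) : Prop :=
  (Λ = Λ' ∧ m = 0) ∨
  (Λ ≠ Λ' ∧ ∃ k : ℕ,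
    IsLeast {j : ℕ | ∃ P Q, HullOf σ π v Λ P ∧ HullOf σ π v Λ' Q ∧ WalkN σ π v j P Q} k ∧
    (m : ℤ) = 2 * k + (if IsVertex0 σ v Λ then 1 else 0) +
      (if IsVertex0 σ v Λ' then 1 else 0))

/-- `g ∈ GL₂(O_F)`. -/
def InGL2O (v : F → ℤ) (g : Matrix (Fin 2) (Fin 2) F) : Prop :=
  (∀ i j, inO v (g i j)) ∧
    ∃ g' : Matrix (Fin 2) (Fin 2) F, (∀ i j, inO v (g' i j)) ∧ g * g' = 1 ∧ g' * g = 1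

/-- Equivalence of Hermitian matrices: `T ≈ T'` iff `gᵗ T ḡ = T'` for some `g ∈ GL₂(O_F)`. -/
def HermEquiv (σ : F →+* F) (v : F → ℤ) (T T' : Matrix (Fin 2) (Fin 2) F) : Prop :=
  ∃ g, InGL2O v g ∧ g.transpose * T * g.map (fun x => σ x) = T'

/-- `u` is a unit of `O_{F₀}`. -/
def IsUnitO₀ (σ : F →+* F) (v : F → ℤ) (u : F) : Prop :=
  σ u = u ∧ u ≠ 0 ∧ v u = 0

/-- `x` is a norm from `F^×`. -/
def IsNorm (σ : F →+* F) (x : F) : Prop := ∃ y : F, y ≠ 0 ∧ x = y * σ y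


-- bounded valuation predicate
def Ov (v : F → ℤ) (n : ℤ) (x : F) : Prop := x = 0 ∨ n ≤ v x

section val
variable (v : F → ℤ) (π : F)
variable (hπ : π ≠ 0) (hvπ : v π = 1)
variable (hvmul : ∀ x y : F, x ≠ 0 → y ≠ 0 → v (x * y) = v x + v y)
variable (hvadd : ∀ x y : F, x ≠ 0 → y ≠ 0 → x + y ≠ 0 → min (v x) (v y) ≤ v (x + y))

include hvmul in
lemma v_one : v 1 = 0 := by
  have := hvmul 1 1 one_ne_zero one_ne_zero
  simp at this; omega

include hvmul in
lemma v_neg (x : F) (hx : x ≠ 0) : v (-x) = v x := by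
  have h1 : v ((-1 : F) * (-1)) = v (-1) + v (-1) := hvmul _ _ (by norm_num) (by norm_num)
  have h2 : v (1 : F) = 0 := v_one v hvmul
  simp at h1
  have h3 : v ((-1 : F) * x) = v (-1) + v x := hvmul _ _ (by norm_num) hx
  simp at h3
  omega

include hvmul in
lemma v_inv (x : F) (hx : x ≠ 0) : v x⁻¹ = - v x := by
  have := hvmul x x⁻¹ hx (inv_ne_zero hx)
  rw [mul_inv_cancel₀ hx, v_one v hvmul] at this
  omega

include hπ hvπ hvmul in
lemma v_zpow : ∀ k : ℤ, v (π ^ k) = k := by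
  have hn : ∀ n : ℕ, v (π ^ n) = n := by
    intro n
    induction n with
    | zero => simpa using v_one v hvmul
    | succ n ih =>
        have := hvmul (π ^ n) π (pow_ne_zero _ hπ) hπ
        rw [← pow_succ] at this
        rw [this, ih, hvπ]; push_cast; ring
  intro k
  rcases k with k | k
  · simpa using hn k
  · rw [zpow_negSucc, v_inv v hvmul _ (pow_ne_zero _ hπ), hn, Int.negSucc_eq]
    push_cast
    ring

include hvadd in
lemma Ov_add {n : ℤ} {x y : F} (hx : Ov v n x) (hy : Ov v n y) : Ov v n (x + y) := by
  by_cases hx0 : x = 0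
  · subst hx0; simpa using hy
  by_cases hy0 : y = 0
  · subst hy0; simpa using hx
  by_cases hxy : x + y = 0
  · left; exact hxy
  · right
    have h1 : n ≤ v x := hx.resolve_left hx0
    have h2 : n ≤ v y := hy.resolve_left hy0
    have := hvadd x y hx0 hy0 hxy
    omega

end val

section val2
variable (v : F → ℤ)
variable (hvmul : ∀ x y : F, x ≠ 0 → y ≠ 0 → v (x * y) = v x + v y)

include hvmul in
lemma Ov_mul {m n : ℤ} {x y : F} (hx : Ov v m x) (hy : Ov v n y) : Ov v (m + n) (x * y) := by
  rcases hx with rfl | hx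
  · left; simp
  rcases hy with rfl | hy
  · left; simp
  by_cases hx0 : x = 0
  · left; simp [hx0]
  by_cases hy0 : y = 0
  · left; simp [hy0]
  right
  rw [hvmul x y hx0 hy0]
  omega

lemma Ov_mono {m n : ℤ} {x : F} (h : m ≤ n) (hx : Ov v n x) : Ov v m x := by
  rcases hx with rfl | hx
  · left; rfl
  · right; omega

include hvmul in
lemma Ov_neg {n : ℤ} {x : F} (hx : Ov v n x) : Ov v n (-x) := by
  rcases hx with rfl | hx
  · left; simp
  by_cases hx0 : x = 0
  · left; simp [hx0]
  · right; rw [v_neg v hvmul x hx0]; exact hx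

lemma inO_Ov {x : F} : inO v x ↔ Ov v 0 x := Iff.rfl

include hvmul in
lemma inO_one : inO v (1 : F) := Or.inr (le_of_eq (v_one v hvmul).symm)

end val2

section hermlemmas
variable (σ : F →+* F)

lemma herm_smul_left (a : F) (x y : F × F) : herm σ (a • x) y = a * herm σ x y := by
  simp [herm, Prod.smul_fst, Prod.smul_snd, smul_eq_mul]; ring

lemma herm_smul_right (a : F) (x y : F × F) : herm σ x (a • y) = σ a * herm σ x y := by
  simp [herm, Prod.smul_fst, Prod.smul_snd, smul_eq_mul, map_mul]; ring

lemma herm_add_left (x y z : F × F) : herm σ (x + y) z = herm σ x z + herm σ y z := by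
  simp [herm]; ring

lemma herm_add_right (x y z : F × F) : herm σ x (y + z) = herm σ x y + herm σ x z := by
  simp [herm, map_add]; ring

lemma herm_conj (hinv : ∀ x, σ (σ x) = x) (x y : F × F) :
    herm σ y x = σ (herm σ x y) := by
  simp [herm, map_add, map_mul, hinv]; ring

end hermlemmas

section spanlemmas
variable (v : F → ℤ)
variable (hvmul : ∀ x y : F, x ≠ 0 → y ≠ 0 → v (x * y) = v x + v y)
variable (hvadd : ∀ x y : F, x ≠ 0 → y ≠ 0 → x + y ≠ 0 → min (v x) (v y) ≤ v (x + y))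

include hvmul in
lemma mem_spanL_left (u w : F × F) : u ∈ spanL v u w :=
  ⟨1, 0, inO_one v hvmul, Or.inl rfl, by simp⟩

include hvmul in
lemma mem_spanL_right (u w : F × F) : w ∈ spanL v u w :=
  ⟨0, 1, Or.inl rfl, inO_one v hvmul, by simp⟩

include hvmul hvadd in
lemma spanL_comb {u w x y : F × F} {a c : F} (hx : x ∈ spanL v u w) (hy : y ∈ spanL v u w)
    (ha : inO v a) (hc : inO v c) : a • x + c • y ∈ spanL v u w := by
  obtain ⟨a1, b1, ha1, hb1, rfl⟩ := hx
  obtain ⟨a2, b2, ha2, hb2, rfl⟩ := hy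
  refine ⟨a * a1 + c * a2, a * b1 + c * b2, ?_, ?_, ?_⟩
  · exact Ov_add v hvadd (Ov_mul v hvmul ha ha1) (Ov_mul v hvmul hc ha2)
  · exact Ov_add v hvadd (Ov_mul v hvmul ha hb1) (Ov_mul v hvmul hc hb2)
  · module

include hvmul hvadd in
lemma spanL_smul_mem {u w x : F × F} {a : F} (hx : x ∈ spanL v u w) (ha : inO v a) :
    a • x ∈ spanL v u w := by
  have := spanL_comb v hvmul hvadd hx hx ha (Or.inl rfl)
  simpa using this

include hvmul hvadd in
lemma spanL_subset {u w u' w' : F × F} (hu : u' ∈ spanL v u w) (hw : w' ∈ spanL v u w) :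
    spanL v u' w' ⊆ spanL v u w := by
  rintro x ⟨a, c, ha, hc, rfl⟩
  exact spanL_comb v hvmul hvadd hu hw ha hc

end spanlemmas

section indep

lemma coeff_unique {u w : F × F} (hind : LinearIndependent F ![u, w]) {a b c d : F}
    (h : a • u + b • w = c • u + d • w) : a = c ∧ b = d := by
  rw [LinearIndependent.pair_iff] at hind
  have h0 : (a - c) • u + (b - d) • w = 0 := by
    have h1 : (a - c) • u + (b - d) • w = (a • u + b • w) - (c • u + d • w) := by module
    rw [h1, h, sub_self]
  obtain ⟨h1, h2⟩ := hind _ _ h0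
  exact ⟨sub_eq_zero.mp h1, sub_eq_zero.mp h2⟩

end indep

section indep2

lemma pair_ne_zero_left {u w : F × F} (hind : LinearIndependent F ![u, w]) : u ≠ 0 := by
  rw [LinearIndependent.pair_iff] at hind
  intro h
  have := (hind 1 0 (by simp [h])).1
  simp at this

lemma det_ne_zero {u w : F × F} (hind : LinearIndependent F ![u, w]) :
    u.1 * w.2 - u.2 * w.1 ≠ 0 := by
  have hind' := hind
  rw [LinearIndependent.pair_iff] at hind'
  intro hd
  have e1 : w.2 • u + (-u.2) • w = 0 := by
    apply Prod.ext
    · simp [smul_eq_mul]; linear_combination hd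
    · simp [smul_eq_mul]; ring
  have e2 : w.1 • u + (-u.1) • w = 0 := by
    apply Prod.ext
    · simp [smul_eq_mul]; ring
    · simp [smul_eq_mul]; linear_combination -hd
  obtain ⟨h1, h2⟩ := hind' _ _ e1
  obtain ⟨h3, h4⟩ := hind' _ _ e2
  apply pair_ne_zero_left hind
  have : u.1 = 0 := by simpa using h4
  have : u.2 = 0 := by simpa using h2
  exact Prod.ext (by simpa using h4) (by simpa using h2)

lemma exists_coords {u w : F × F} (hind : LinearIndependent F ![u, w]) (x : F × F) :
    ∃ a b : F, x = a • u + b • w := by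
  set d := u.1 * w.2 - u.2 * w.1 with hd
  have hd0 : d ≠ 0 := det_ne_zero hind
  refine ⟨(x.1 * w.2 - x.2 * w.1) / d, (u.1 * x.2 - u.2 * x.1) / d, ?_⟩
  apply Prod.ext
  · simp [smul_eq_mul]
    field_simp
    ring
  · simp [smul_eq_mul]
    field_simp
    ring

lemma pair_smul_indep {u w : F × F} (hind : LinearIndependent F ![u, w]) {c d : F}
    (hc : c ≠ 0) (hd : d ≠ 0) : LinearIndependent F ![c • u, d • w] := by
  rw [LinearIndependent.pair_iff] at hind ⊢
  intro s t hst
  have : (s * c) • u + (t * d) • w = 0 := by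
    rw [mul_smul, mul_smul]; exact hst
  obtain ⟨h1, h2⟩ := hind _ _ this
  constructor
  · rcases mul_eq_zero.mp h1 with h | h
    · exact h
    · exact absurd h hc
  · rcases mul_eq_zero.mp h2 with h | h
    · exact h
    · exact absurd h hd

end indep2

lemma spanL_comm (v : F → ℤ) (u w : F × F) : spanL v u w = spanL v w u := by
  ext x
  constructor <;> rintro ⟨a, c, ha, hc, rfl⟩ <;> exact ⟨c, a, hc, ha, add_comm _ _⟩

section normal
variable (v : F → ℤ) (π : F)
variable (hπ : π ≠ 0) (hvπ : v π = 1)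
variable (hvmul : ∀ x y : F, x ≠ 0 → y ≠ 0 → v (x * y) = v x + v y)
variable (hvadd : ∀ x y : F, x ≠ 0 → y ≠ 0 → x + y ≠ 0 → min (v x) (v y) ≤ v (x + y))

include hvmul in
lemma mem_span_coeff_iff {u w : F × F} (hind : LinearIndependent F ![u, w]) (a b : F) :
    a • u + b • w ∈ spanL v u w ↔ inO v a ∧ inO v b := by
  constructor
  · rintro ⟨a', b', ha', hb', h⟩
    obtain ⟨rfl, rfl⟩ := coeff_unique hind h
    exact ⟨ha', hb'⟩
  · rintro ⟨ha, hb⟩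
    exact ⟨a, b, ha, hb, rfl⟩

include hvmul hvadd in
lemma swap_basis {u0 w0 : F × F} (hind : LinearIndependent F ![u0, w0]) {α β : F}
    (hα0 : α ≠ 0) (hα : v α = 0) (hβ : inO v β) :
    LinearIndependent F ![α • u0 + β • w0, w0] ∧
      spanL v u0 w0 = spanL v (α • u0 + β • w0) w0 := by
  set m := α • u0 + β • w0 with hm
  have hinv0 : inO v α⁻¹ := Or.inr (by rw [v_inv v hvmul α hα0, hα]; norm_num)
  have hindm : LinearIndependent F ![m, w0] := by
    rw [LinearIndependent.pair_iff] at hind ⊢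
    intro s t hst
    have : (s * α) • u0 + (s * β + t) • w0 = 0 := by
      rw [hm] at hst
      rw [← hst]; module
    obtain ⟨h1, h2⟩ := hind _ _ this
    have hs : s = 0 := by
      rcases mul_eq_zero.mp h1 with h | h
      · exact h
      · exact absurd h hα0
    subst hs
    simp at h2
    exact ⟨rfl, h2⟩
  refine ⟨hindm, ?_⟩
  apply le_antisymm
  · -- spanL u0 w0 ⊆ spanL m w0
    apply spanL_subset v hvmul hvadd
    · -- u0 ∈ spanL m w0
      refine ⟨α⁻¹, -(β * α⁻¹), hinv0, Ov_neg v hvmul (by simpa using Ov_mul v hvmul hβ hinv0), ?_⟩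
      rw [hm]
      rw [smul_add, smul_smul, smul_smul, inv_mul_cancel₀ hα0]
      module
    · exact mem_spanL_right v hvmul m w0
  · apply spanL_subset v hvmul hvadd
    · exact ⟨α, β, Or.inr (le_of_eq hα.symm), hβ, rfl⟩
    · exact mem_spanL_right v hvmul u0 w0

lemma pair_comm_indep {u w : F × F} (hind : LinearIndependent F ![u, w]) :
    LinearIndependent F ![w, u] := by
  rw [LinearIndependent.pair_iff] at hind ⊢
  intro s t hst
  have := hind t s (by rw [← hst]; module)
  exact ⟨this.2, this.1⟩

include hπ hvπ hvmul hvadd in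
lemma normal_form {u0 w0 : F × F} (hind : LinearIndependent F ![u0, w0]) {b : F × F}
    (hb : b ≠ 0) :
    ∃ (n : ℤ) (w : F × F), LinearIndependent F ![(π ^ (-n)) • b, w] ∧
      spanL v u0 w0 = spanL v ((π ^ (-n)) • b) w := by
  obtain ⟨c1, c2, hbc⟩ := exists_coords hind b
  have hzp : ∀ k : ℤ, (π ^ k : F) ≠ 0 := fun k => zpow_ne_zero k hπ
  have hvzp : ∀ k : ℤ, v (π ^ k) = k := v_zpow v π hπ hvπ hvmul
  by_cases hc2 : c2 = 0
  · subst hc2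
    have hc1 : c1 ≠ 0 := by rintro rfl; simp at hbc; exact hb hbc
    have hα0 : (π ^ (-(v c1)) * c1 : F) ≠ 0 := mul_ne_zero (hzp _) hc1
    have hα : v (π ^ (-(v c1)) * c1) = 0 := by
      rw [hvmul _ _ (hzp _) hc1, hvzp]; omega
    have hkey : (π ^ (-(v c1))) • b = (π ^ (-(v c1)) * c1) • u0 + (0 : F) • w0 := by
      rw [hbc]; module
    obtain ⟨hi, hs⟩ := swap_basis v hvmul hvadd hind hα0 hα (Or.inl rfl)
    exact ⟨v c1, w0, by rw [hkey]; exact hi, by rw [hkey]; exact hs⟩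
  by_cases hc1 : c1 = 0
  · subst hc1
    have hind' := pair_comm_indep hind
    have hα0 : (π ^ (-(v c2)) * c2 : F) ≠ 0 := mul_ne_zero (hzp _) hc2
    have hα : v (π ^ (-(v c2)) * c2) = 0 := by
      rw [hvmul _ _ (hzp _) hc2, hvzp]; omega
    have hkey : (π ^ (-(v c2))) • b = (π ^ (-(v c2)) * c2) • w0 + (0 : F) • u0 := by
      rw [hbc]; module
    obtain ⟨hi, hs⟩ := swap_basis v hvmul hvadd hind' hα0 hα (Or.inl rfl)
    refine ⟨v c2, u0, by rw [hkey]; exact hi, ?_⟩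
    rw [spanL_comm, hs, hkey]
  by_cases hcc : v c1 ≤ v c2
  · have hα0 : (π ^ (-(v c1)) * c1 : F) ≠ 0 := mul_ne_zero (hzp _) hc1
    have hα : v (π ^ (-(v c1)) * c1) = 0 := by
      rw [hvmul _ _ (hzp _) hc1, hvzp]; omega
    have hβ : inO v (π ^ (-(v c1)) * c2) := by
      right; rw [hvmul _ _ (hzp _) hc2, hvzp]; omega
    have hkey : (π ^ (-(v c1))) • b
        = (π ^ (-(v c1)) * c1) • u0 + (π ^ (-(v c1)) * c2) • w0 := by
      rw [hbc]; module
    obtain ⟨hi, hs⟩ := swap_basis v hvmul hvadd hind hα0 hα hβ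
    exact ⟨v c1, w0, by rw [hkey]; exact hi, by rw [hkey]; exact hs⟩
  · have hind' := pair_comm_indep hind
    have hα0 : (π ^ (-(v c2)) * c2 : F) ≠ 0 := mul_ne_zero (hzp _) hc2
    have hα : v (π ^ (-(v c2)) * c2) = 0 := by
      rw [hvmul _ _ (hzp _) hc2, hvzp]; omega
    have hβ : inO v (π ^ (-(v c2)) * c1) := by
      right; rw [hvmul _ _ (hzp _) hc1, hvzp]; omega
    have hkey : (π ^ (-(v c2))) • b
        = (π ^ (-(v c2)) * c2) • w0 + (π ^ (-(v c2)) * c1) • u0 := by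
      rw [hbc]; module
    obtain ⟨hi, hs⟩ := swap_basis v hvmul hvadd hind' hα0 hα hβ
    refine ⟨v c2, u0, by rw [hkey]; exact hi, ?_⟩
    rw [spanL_comm, hs, hkey]

end normal

set_option linter.unusedSectionVars false

section nis
variable (v : F → ℤ) (π : F)
variable (hπ : π ≠ 0) (hvπ : v π = 1)
variable (hvmul : ∀ x y : F, x ≠ 0 → y ≠ 0 → v (x * y) = v x + v y)

include hπ hvπ hvmul in
lemma nIs_span {b w : F × F} {n : ℤ} (hind : LinearIndependent F ![(π ^ (-n)) • b, w]) :
    nIs π b (spanL v ((π ^ (-n)) • b) w) n := by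
  have hvzp : ∀ k : ℤ, v (π ^ k) = k := v_zpow v π hπ hvπ hvmul
  have key : ∀ m : ℤ, (π ^ (-m)) • b = (π ^ (n - m)) • ((π ^ (-n)) • b) + (0 : F) • w := by
    intro m
    rw [smul_smul, ← zpow_add₀ hπ]
    rw [show n - m + -n = -m by ring]
    module
  constructor
  · exact mem_spanL_left v hvmul _ _
  · intro m hm
    have hm' : (π ^ (-m)) • b ∈ spanL v ((π ^ (-n)) • b) w := hm
    rw [key m] at hm'
    rw [mem_span_coeff_iff v hvmul hind] at hm'
    rcases hm'.1 with h | h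
    · exact absurd h (zpow_ne_zero _ hπ)
    · rw [hvzp] at h; omega

end nis

section dual
variable (σ : F →+* F) (v : F → ℤ) (π : F)
variable (hinv : ∀ x, σ (σ x) = x)
variable (hπ : π ≠ 0) (hvπ : v π = 1)
variable (hvσ : ∀ x, v (σ x) = v x)
variable (hvmul : ∀ x y : F, x ≠ 0 → y ≠ 0 → v (x * y) = v x + v y)
variable (hvadd : ∀ x y : F, x ≠ 0 → y ≠ 0 → x + y ≠ 0 → min (v x) (v y) ≤ v (x + y))

include hvσ in
lemma Ov_sigma {n : ℤ} {x : F} (hx : Ov v n x) : Ov v n (σ x) := by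
  by_cases h0 : σ x = 0
  · left; exact h0
  rcases hx with rfl | hx
  · left; simp
  · right; rw [hvσ]; exact hx

include hinv in
lemma herm_expand (u w : F × F) (huu : herm σ u u = 0) (a b a' b' : F) :
    herm σ (a • u + b • w) (a' • u + b' • w)
      = a * (σ b' * herm σ u w) + (b * (σ a' * σ (herm σ u w)) + b * (σ b' * herm σ w w)) := by
  simp only [herm_add_left, herm_add_right, herm_smul_left, herm_smul_right]
  rw [herm_conj σ hinv u w, huu]
  ring

include hinv hπ hvπ hvσ hvmul hvadd in
lemma dual_eq_pi_span {u w : F × F} (hind : LinearIndependent F ![u, w])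
    (huu : herm σ u u = 0) (ht0 : herm σ u w ≠ 0) (ht : v (herm σ u w) = -1)
    (hs : herm σ w w = 0 ∨ 0 ≤ v (herm σ w w)) :
    dualL σ v (spanL v u w) = (fun x => π • x) '' (spanL v u w) := by
  set t := herm σ u w with htdef
  set s := herm σ w w with hsdef
  have hOs : Ov v 0 s := hs
  have hOt : Ov v (-1) t := Or.inr (le_of_eq ht.symm)
  ext x
  constructor
  · intro hx
    obtain ⟨a, β, rfl⟩ := exists_coords hind x
    have h1 : inO v (herm σ (a • u + β • w) u) := hx u (mem_spanL_left v hvmul u w)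
    have h2 : inO v (herm σ (a • u + β • w) w) := hx w (mem_spanL_right v hvmul u w)
    have e1 : herm σ (a • u + β • w) u = β * σ t := by
      have := herm_expand σ hinv u w huu a β 1 0
      simpa using this
    have e2 : herm σ (a • u + β • w) w = a * t + β * s := by
      have h' := herm_expand σ hinv u w huu a β 0 1
      simp [map_one] at h'
      exact h'
    rw [e1] at h1
    rw [e2] at h2
    -- derive Ov v 1 β
    have hOβ : Ov v 1 β := by
      by_cases hβ0 : β = 0
      · left; exact hβ0
      · right
        have hσt0 : σ t ≠ 0 := fun h => ht0 (by rw [← hinv t, h, map_zero])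
        rcases h1 with h | h
        · exact absurd h (mul_ne_zero hβ0 hσt0)
        · rw [hvmul _ _ hβ0 hσt0, hvσ] at h; omega
    -- derive Ov v 1 a
    have hOa : Ov v 1 a := by
      by_cases ha0 : a = 0
      · left; exact ha0
      · right
        have hβs : Ov v 1 (β * s) := by
          have := Ov_mul v hvmul hOβ hOs
          simpa using this
        have hat : Ov v 0 (a * t) := by
          have heq : a * t = (a * t + β * s) + (-(β * s)) := by ring
          rw [heq]
          have h2' : Ov v 0 (a * t + β * s) := h2
          exact Ov_add v hvadd h2' (Ov_mono v (by omega) (Ov_neg v hvmul hβs))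
        rcases hat with h | h
        · exact absurd h (mul_ne_zero ha0 ht0)
        · rw [hvmul _ _ ha0 ht0, ht] at h; omega
    refine ⟨(a * π⁻¹) • u + (β * π⁻¹) • w, ?_, ?_⟩
    · have hπ1 : Ov v (-1) (π⁻¹ : F) := Or.inr (by rw [v_inv v hvmul π hπ, hvπ])
      refine ⟨a * π⁻¹, β * π⁻¹, ?_, ?_, rfl⟩
      · have := Ov_mul v hvmul hOa hπ1; exact (by simpa using this : Ov v 0 (a * π⁻¹))
      · have := Ov_mul v hvmul hOβ hπ1; exact (by simpa using this : Ov v 0 (β * π⁻¹))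
    · show π • _ = _
      rw [smul_add, smul_smul, smul_smul]
      have c1 : π * (a * π⁻¹) = a := by field_simp
      have c2 : π * (β * π⁻¹) = β := by field_simp
      rw [c1, c2]
  · rintro ⟨y, hy, rfl⟩
    obtain ⟨a, β, ha, hβ, rfl⟩ := hy
    intro z hz
    obtain ⟨a', β', ha', hβ', rfl⟩ := hz
    show inO v (herm σ (π • (a • u + β • w)) _)
    rw [herm_smul_left, herm_expand σ hinv u w huu a β a' β']
    have hOπ : Ov v 1 π := Or.inr (le_of_eq hvπ.symm)
    have hOa : Ov v 0 a := ha
    have hOβ : Ov v 0 β := hβ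
    have hOa' : Ov v 0 (σ a') := Ov_sigma σ v hvσ ha'
    have hOβ' : Ov v 0 (σ β') := Ov_sigma σ v hvσ hβ'
    have hOσt : Ov v (-1) (σ t) := by
      rcases hOt with h | h
      · left; rw [h, map_zero]
      · by_cases h0 : σ t = 0
        · left; exact h0
        · right; rw [hvσ]; exact h
    have T1 : Ov v (-1) (a * (σ β' * t)) := by
      have := Ov_mul v hvmul hOa (Ov_mul v hvmul hOβ' hOt); simpa using this
    have T2 : Ov v (-1) (β * (σ a' * σ t)) := by
      have := Ov_mul v hvmul hOβ (Ov_mul v hvmul hOa' hOσt); simpa using this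
    have T3 : Ov v (-1) (β * (σ β' * s)) := by
      have h0 : Ov v 0 (β * (σ β' * s)) := by
        simpa using Ov_mul v hvmul hOβ (Ov_mul v hvmul hOβ' hOs)
      exact Ov_mono v (by omega) h0
    have hsum : Ov v (-1) (a * (σ β' * t) + (β * (σ a' * σ t) + β * (σ β' * s))) :=
      Ov_add v hvadd T1 (Ov_add v hvadd T2 T3)
    have hfin := Ov_mul v hvmul hOπ hsum
    have : Ov v 0 (π * (a * (σ β' * t) + (β * (σ a' * σ t) + β * (σ β' * s)))) := by
      simpa using hfin
    exact this

end dual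

section dual2
variable (σ : F →+* F) (v : F → ℤ) (π : F)
variable (hinv : ∀ x, σ (σ x) = x)
variable (hπ : π ≠ 0) (hvπ : v π = 1)
variable (hvσ : ∀ x, v (σ x) = v x)
variable (hvmul : ∀ x y : F, x ≠ 0 → y ≠ 0 → v (x * y) = v x + v y)
variable (hvadd : ∀ x y : F, x ≠ 0 → y ≠ 0 → x + y ≠ 0 → min (v x) (v y) ≤ v (x + y))

include hinv hvπ hvσ hvmul hvadd in
lemma dual_eq_span {u w : F × F} (hind : LinearIndependent F ![u, w])
    (huu : herm σ u u = 0) (ht0 : herm σ u w ≠ 0) (ht : v (herm σ u w) = 0)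
    (hs : herm σ w w = 0 ∨ 0 ≤ v (herm σ w w)) :
    dualL σ v (spanL v u w) = spanL v u w := by
  set t := herm σ u w with htdef
  set s := herm σ w w with hsdef
  have hOs : Ov v 0 s := hs
  have hOt : Ov v 0 t := Or.inr (le_of_eq ht.symm)
  have hσt0 : σ t ≠ 0 := fun h => ht0 (by rw [← hinv t, h, map_zero])
  ext x
  constructor
  · intro hx
    obtain ⟨a, β, rfl⟩ := exists_coords hind x
    have h1 : inO v (herm σ (a • u + β • w) u) := hx u (mem_spanL_left v hvmul u w)
    have h2 : inO v (herm σ (a • u + β • w) w) := hx w (mem_spanL_right v hvmul u w)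
    have e1 : herm σ (a • u + β • w) u = β * σ t := by
      have := herm_expand σ hinv u w huu a β 1 0
      simpa using this
    have e2 : herm σ (a • u + β • w) w = a * t + β * s := by
      have h' := herm_expand σ hinv u w huu a β 0 1
      simp [map_one] at h'
      exact h'
    rw [e1] at h1
    rw [e2] at h2
    have hOβ : Ov v 0 β := by
      by_cases hβ0 : β = 0
      · left; exact hβ0
      · right
        rcases h1 with h | h
        · exact absurd h (mul_ne_zero hβ0 hσt0)
        · rw [hvmul _ _ hβ0 hσt0, hvσ, ht] at h; omega
    have hOa : Ov v 0 a := by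
      by_cases ha0 : a = 0
      · left; exact ha0
      · right
        have hβs : Ov v 0 (β * s) := by simpa using Ov_mul v hvmul hOβ hOs
        have hat : Ov v 0 (a * t) := by
          have heq : a * t = (a * t + β * s) + (-(β * s)) := by ring
          rw [heq]
          exact Ov_add v hvadd h2 (Ov_neg v hvmul hβs)
        rcases hat with h | h
        · exact absurd h (mul_ne_zero ha0 ht0)
        · rw [hvmul _ _ ha0 ht0, ht] at h; omega
    exact ⟨a, β, hOa, hOβ, rfl⟩
  · rintro ⟨a, β, ha, hβ, rfl⟩
    intro z hz
    obtain ⟨a', β', ha', hβ', rfl⟩ := hz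
    show inO v (herm σ (a • u + β • w) _)
    rw [herm_expand σ hinv u w huu a β a' β']
    have hOσt : Ov v 0 (σ t) := Ov_sigma σ v hvσ hOt
    have hOa' : Ov v 0 (σ a') := Ov_sigma σ v hvσ ha'
    have hOβ' : Ov v 0 (σ β') := Ov_sigma σ v hvσ hβ'
    have T1 : Ov v 0 (a * (σ β' * t)) := by
      simpa using Ov_mul v hvmul (show Ov v 0 a from ha) (Ov_mul v hvmul hOβ' hOt)
    have T2 : Ov v 0 (β * (σ a' * σ t)) := by
      simpa using Ov_mul v hvmul (show Ov v 0 β from hβ) (Ov_mul v hvmul hOa' hOσt)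
    have T3 : Ov v 0 (β * (σ β' * s)) := by
      simpa using Ov_mul v hvmul (show Ov v 0 β from hβ) (Ov_mul v hvmul hOβ' hOs)
    exact Ov_add v hvadd T1 (Ov_add v hvadd T2 T3)

include hinv hπ hvπ hvσ hvmul hvadd in
lemma gram_of_vertex2 {u w : F × F} (hind : LinearIndependent F ![u, w])
    (huu : herm σ u u = 0)
    (heven : ∀ x : F, σ x = x → x ≠ 0 → Even (v x))
    (hdual : dualL σ v (spanL v u w) = (fun x => π • x) '' (spanL v u w)) :
    herm σ u w ≠ 0 ∧ v (herm σ u w) = -1 ∧ (herm σ w w = 0 ∨ 0 ≤ v (herm σ w w)) := by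
  set t := herm σ u w with htdef
  set s := herm σ w w with hsdef
  -- step 1 : π • w ∈ dual
  have hw : π • w ∈ dualL σ v (spanL v u w) := by
    rw [hdual]
    exact ⟨w, mem_spanL_right v hvmul u w, rfl⟩
  have h1 : inO v (herm σ (π • w) u) := hw u (mem_spanL_left v hvmul u w)
  have h2 : inO v (herm σ (π • w) w) := hw w (mem_spanL_right v hvmul u w)
  have e1 : herm σ (π • w) u = π * σ t := by
    rw [herm_smul_left, herm_conj σ hinv u w]
  have e2 : herm σ (π • w) w = π * s := by rw [herm_smul_left]
  rw [e1] at h1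
  rw [e2] at h2
  -- s condition
  have hsfix : σ s = s := by
    rw [hsdef, ← herm_conj σ hinv w w]
  have hscond : s = 0 ∨ 0 ≤ v s := by
    rcases h2 with h | h
    · left
      rcases mul_eq_zero.mp h with h' | h'
      · exact absurd h' hπ
      · exact h'
    · by_cases hs0 : s = 0
      · left; exact hs0
      · right
        rw [hvmul _ _ hπ hs0, hvπ] at h
        obtain ⟨r, hr⟩ := heven s hsfix hs0
        omega
  -- u ∉ image
  have hu : u ∉ (fun x => π • x) '' (spanL v u w) := by
    rintro ⟨y, hy, hyeq⟩
    obtain ⟨a, β, ha, hβ, rfl⟩ := hy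
    have hyeq' : π • (a • u + β • w) = u := hyeq
    have hco : (π * a) • u + (π * β) • w = (1 : F) • u + (0 : F) • w := by
      rw [show (π * a) • u + (π * β) • w = π • (a • u + β • w) by module, hyeq']
      module
    obtain ⟨hA, _⟩ := coeff_unique hind hco
    have ha0 : a ≠ 0 := by
      rintro rfl; rw [mul_zero] at hA; exact (one_ne_zero (α := F)) hA.symm
    have hva : v a = -1 := by
      have hm := hvmul π a hπ ha0
      rw [hA, v_one v hvmul, hvπ] at hm
      omega
    rcases ha with h | h
    · exact ha0 h
    · omega
  rw [← hdual] at hu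
  -- extract from hu
  have : ∃ y ∈ spanL v u w, ¬ inO v (herm σ u y) := by
    by_contra hcon
    push_neg at hcon
    exact hu fun y hy => hcon y hy
  obtain ⟨y, hy, hbad⟩ := this
  obtain ⟨a', β', ha', hβ', rfl⟩ := hy
  have e3 : herm σ u (a' • u + β' • w) = σ β' * t := by
    have := herm_expand σ hinv u w huu 1 0 a' β'
    simpa using this
  rw [e3] at hbad
  have ht0 : t ≠ 0 := by
    intro h
    exact hbad (Or.inl (by rw [h, mul_zero]))
  have hβ'0 : σ β' ≠ 0 := by
    rintro h
    exact hbad (Or.inl (by rw [h, zero_mul]))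
  have htneg : v t < 0 := by
    by_contra hc
    push_neg at hc
    apply hbad
    right
    rw [hvmul _ _ hβ'0 ht0]
    have := Ov_sigma σ v hvσ (show Ov v 0 β' from hβ')
    rcases this with h | h
    · exact absurd h hβ'0
    · omega
  have htge : -1 ≤ v t := by
    rcases h1 with h | h
    · rcases mul_eq_zero.mp h with h' | h'
      · exact absurd h' hπ
      · exact absurd (by rw [← hinv t, h', map_zero]) ht0
    · have hσt0 : σ t ≠ 0 := fun h' => ht0 (by rw [← hinv t, h', map_zero])
      rw [hvmul _ _ hπ hσt0, hvπ, hvσ] at h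
      omega
  exact ⟨ht0, by omega, hscond⟩

end dual2

section main
variable (σ : F →+* F) (π : F) (v : F → ℤ)
variable (hinv : ∀ x, σ (σ x) = x)
variable (hσπ : σ π = -π)
variable (hπ : π ≠ 0)
variable (hvπ : v π = 1)
variable (hvσ : ∀ x, v (σ x) = v x)
variable (hvmul : ∀ x y : F, x ≠ 0 → y ≠ 0 → v (x * y) = v x + v y)
variable (hvadd : ∀ x y : F, x ≠ 0 → y ≠ 0 → x + y ≠ 0 → min (v x) (v y) ≤ v (x + y))
variable (heven : ∀ x : F, σ x = x → x ≠ 0 → Even (v x))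

include hπ in
lemma zsmul_combine (j k : ℤ) (x : F × F) :
    (π ^ j) • ((π ^ k) • x) = (π ^ (j + k)) • x := by
  rw [smul_smul, ← zpow_add₀ hπ]

include hπ in
lemma pi_smul_zpow (k : ℤ) (x : F × F) : π • ((π ^ k) • x) = (π ^ (k + 1)) • x := by
  rw [smul_smul, zpow_add_one₀ hπ, mul_comm]

include hπ in
lemma sigma_zpow_ne (k : ℤ) : σ (π ^ k) ≠ 0 := by
  rw [map_zpow₀]
  exact zpow_ne_zero _ (fun h => hπ (by rwa [map_eq_zero_iff σ σ.injective] at h))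

include hπ hvσ in
lemma v_sigma_zpow (k : ℤ) (hvzp : ∀ k : ℤ, v (π ^ k) = k) : v (σ (π ^ k)) = k := by
  rw [hvσ, hvzp]

include hπ in
lemma indep_scaled {b w : F × F} {n : ℤ}
    (hind : LinearIndependent F ![(π ^ (-n)) • b, w]) (j k : ℤ) :
    LinearIndependent F ![(π ^ (-(n + j))) • b, (π ^ k) • w] := by
  have h := pair_smul_indep hind (zpow_ne_zero (-j) hπ) (zpow_ne_zero k hπ)
  have e : (π ^ (-j)) • ((π ^ (-n)) • b) = (π ^ (-(n + j))) • b := by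
    rw [zsmul_combine π hπ]
    congr 1
    ring_nf
  rwa [e] at h

include hinv hπ hvπ hvσ hvmul hvadd in
lemma level_vertex2 {b w : F × F} {n : ℤ} (hbb : herm σ b b = 0)
    (hind : LinearIndependent F ![(π ^ (-n)) • b, w])
    (hT0 : herm σ b w ≠ 0) (hT : v (herm σ b w) = n - 1)
    (hS : herm σ w w = 0 ∨ 0 ≤ v (herm σ w w))
    (i : ℤ) (hi : 0 ≤ i) :
    IsVertex2 σ π v (spanL v ((π ^ (-(n + i))) • b) ((π ^ i) • w)) ∧
      LinearIndependent F ![(π ^ (-(n + i))) • b, (π ^ i) • w] ∧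
      nIs π b (spanL v ((π ^ (-(n + i))) • b) ((π ^ i) • w)) (n + i) := by
  have hvzp : ∀ k : ℤ, v (π ^ k) = k := v_zpow v π hπ hvπ hvmul
  have hindi := indep_scaled π hπ hind i i
  have huu : herm σ ((π ^ (-(n + i))) • b) ((π ^ (-(n + i))) • b) = 0 := by
    rw [herm_smul_left, herm_smul_right, hbb, mul_zero, mul_zero]
  have ht : herm σ ((π ^ (-(n + i))) • b) ((π ^ i) • w)
      = π ^ (-(n + i)) * (σ (π ^ i) * herm σ b w) := by
    rw [herm_smul_left, herm_smul_right]
  have ht0 : herm σ ((π ^ (-(n + i))) • b) ((π ^ i) • w) ≠ 0 := by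
    rw [ht]
    exact mul_ne_zero (zpow_ne_zero _ hπ) (mul_ne_zero (sigma_zpow_ne σ π hπ i) hT0)
  have htv : v (herm σ ((π ^ (-(n + i))) • b) ((π ^ i) • w)) = -1 := by
    rw [ht, hvmul _ _ (zpow_ne_zero _ hπ) (mul_ne_zero (sigma_zpow_ne σ π hπ i) hT0),
      hvmul _ _ (sigma_zpow_ne σ π hπ i) hT0, hvzp, v_sigma_zpow σ π v hπ hvσ i hvzp, hT]
    ring
  have hsv : herm σ ((π ^ i) • w) ((π ^ i) • w) = 0 ∨
      0 ≤ v (herm σ ((π ^ i) • w) ((π ^ i) • w)) := by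
    have hw : herm σ ((π ^ i) • w) ((π ^ i) • w) = π ^ i * (σ (π ^ i) * herm σ w w) := by
      rw [herm_smul_left, herm_smul_right]
    rcases hS with h | h
    · left; rw [hw, h, mul_zero, mul_zero]
    · by_cases hS0 : herm σ w w = 0
      · left; rw [hw, hS0, mul_zero, mul_zero]
      · right
        rw [hw, hvmul _ _ (zpow_ne_zero _ hπ) (mul_ne_zero (sigma_zpow_ne σ π hπ i) hS0),
          hvmul _ _ (sigma_zpow_ne σ π hπ i) hS0, hvzp, v_sigma_zpow σ π v hπ hvσ i hvzp]
        omega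
  refine ⟨⟨⟨_, _, hindi, rfl⟩, ?_⟩, hindi, ?_⟩
  · exact dual_eq_pi_span σ v π hinv hπ hvπ hvσ hvmul hvadd hindi huu ht0 htv hsv
  · exact nIs_span v π hπ hvπ hvmul hindi

include hinv hσπ hπ hvπ hvσ hvmul hvadd in
lemma level_adj {b w : F × F} {n : ℤ} (hbb : herm σ b b = 0)
    (hind : LinearIndependent F ![(π ^ (-n)) • b, w])
    (hT0 : herm σ b w ≠ 0) (hT : v (herm σ b w) = n - 1)
    (hS : herm σ w w = 0 ∨ 0 ≤ v (herm σ w w))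
    (i : ℤ) (hi : 0 ≤ i) :
    AdjV σ π v (spanL v ((π ^ (-(n + i))) • b) ((π ^ i) • w))
      (spanL v ((π ^ (-(n + (i + 1)))) • b) ((π ^ (i + 1)) • w)) := by
  have hvzp : ∀ k : ℤ, v (π ^ k) = k := v_zpow v π hπ hvπ hvmul
  obtain ⟨hV2, hindi, hnis⟩ :=
    level_vertex2 σ π v hinv hπ hvπ hvσ hvmul hvadd hbb hind hT0 hT hS i hi
  obtain ⟨hV2', hindi', hnis'⟩ :=
    level_vertex2 σ π v hinv hπ hvπ hvσ hvmul hvadd hbb hind hT0 hT hS (i + 1) (by omega)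
  set u₀ := (π ^ (-(n + i))) • b with hu₀
  set w₀ := (π ^ i) • w with hw₀
  set u₁ := (π ^ (-(n + (i + 1)))) • b with hu₁
  set w₁ := (π ^ (i + 1)) • w with hw₁
  have hu01 : u₀ = π • u₁ := by
    rw [hu₀, hu₁, pi_smul_zpow π hπ]
    congr 2
    ring
  have hw01 : w₁ = π • w₀ := by
    rw [hw₀, hw₁, pi_smul_zpow π hπ]
  have hu10 : u₁ = π⁻¹ • u₀ := by
    rw [hu01, smul_smul, inv_mul_cancel₀ hπ, one_smul]
  have hπO : inO v π := Or.inr (by rw [hvπ]; omega)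
  have hne : spanL v u₀ w₀ ≠ spanL v u₁ w₁ := by
    intro h
    have hmem : u₁ ∈ spanL v u₀ w₀ := by
      rw [h]; exact mem_spanL_left v hvmul _ _
    have : n + (i + 1) ∈ {m : ℤ | (π ^ (-m)) • b ∈ spanL v u₀ w₀} := hmem
    have := hnis.2 this
    omega
  -- intersection equals spanL u₀ (π • w₀)
  have hInter : spanL v u₀ w₀ ∩ spanL v u₁ w₁ = spanL v u₀ (π • w₀) := by
    apply le_antisymm
    · rintro x ⟨hx0, hx1⟩
      obtain ⟨a, β, ha, hβ, rfl⟩ := hx0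
      obtain ⟨a', β', ha', hβ', hx⟩ := hx1
      have hconv : a' • u₁ + β' • w₁ = (a' * π⁻¹) • u₀ + (β' * π) • w₀ := by
        rw [hu10, hw01]
        module
      rw [hconv] at hx
      obtain ⟨h1, h2⟩ := coeff_unique hindi hx
      refine ⟨a, β', ha, hβ', ?_⟩
      rw [h2]
      module
    · apply Set.subset_inter
      · apply spanL_subset v hvmul hvadd
        · exact mem_spanL_left v hvmul _ _
        · exact spanL_smul_mem v hvmul hvadd (mem_spanL_right v hvmul _ _) hπO
      · apply spanL_subset v hvmul hvadd
        · refine ⟨π, 0, hπO, Or.inl rfl, ?_⟩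
          rw [hu01]; module
        · rw [← hw01]
          exact mem_spanL_right v hvmul _ _
  -- the intersection is a type-0 vertex
  have hind0 : LinearIndependent F ![u₀, π • w₀] := by
    have := pair_smul_indep hindi (one_ne_zero (α := F)) hπ
    rwa [one_smul] at this
  have huu : herm σ u₀ u₀ = 0 := by
    rw [hu₀, herm_smul_left, herm_smul_right, hbb, mul_zero, mul_zero]
  have htmain : herm σ u₀ w₀ = π ^ (-(n + i)) * (σ (π ^ i) * herm σ b w) := by
    rw [hu₀, hw₀, herm_smul_left, herm_smul_right]
  have ht0' : herm σ u₀ w₀ ≠ 0 := by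
    rw [htmain]
    exact mul_ne_zero (zpow_ne_zero _ hπ) (mul_ne_zero (sigma_zpow_ne σ π hπ i) hT0)
  have htv' : v (herm σ u₀ w₀) = -1 := by
    rw [htmain, hvmul _ _ (zpow_ne_zero _ hπ) (mul_ne_zero (sigma_zpow_ne σ π hπ i) hT0),
      hvmul _ _ (sigma_zpow_ne σ π hπ i) hT0, hvzp, v_sigma_zpow σ π v hπ hvσ i hvzp, hT]
    ring
  have hσπ0 : σ π ≠ 0 := by rw [hσπ]; exact neg_ne_zero.mpr hπ
  have hvσπ : v (σ π) = 1 := by rw [hvσ, hvπ]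
  have ht0 : herm σ u₀ (π • w₀) ≠ 0 := by
    rw [herm_smul_right]
    exact mul_ne_zero hσπ0 ht0'
  have htv : v (herm σ u₀ (π • w₀)) = 0 := by
    rw [herm_smul_right, hvmul _ _ hσπ0 ht0', hvσπ, htv']
    norm_num
  have hs : herm σ (π • w₀) (π • w₀) = 0 ∨ 0 ≤ v (herm σ (π • w₀) (π • w₀)) := by
    have hw : herm σ (π • w₀) (π • w₀) = π * (σ π * herm σ w₀ w₀) := by
      rw [herm_smul_left, herm_smul_right]
    have hs0 : herm σ w₀ w₀ = 0 ∨ 0 ≤ v (herm σ w₀ w₀) := by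
      have hww : herm σ w₀ w₀ = π ^ i * (σ (π ^ i) * herm σ w w) := by
        rw [hw₀, herm_smul_left, herm_smul_right]
      rcases hS with h | h
      · left; rw [hww, h, mul_zero, mul_zero]
      · by_cases hS0 : herm σ w w = 0
        · left; rw [hww, hS0, mul_zero, mul_zero]
        · right
          rw [hww, hvmul _ _ (zpow_ne_zero _ hπ) (mul_ne_zero (sigma_zpow_ne σ π hπ i) hS0),
            hvmul _ _ (sigma_zpow_ne σ π hπ i) hS0, hvzp, v_sigma_zpow σ π v hπ hvσ i hvzp]
          omega
    rcases hs0 with h | h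
    · left; rw [hw, h, mul_zero, mul_zero]
    · by_cases h0 : herm σ w₀ w₀ = 0
      · left; rw [hw, h0, mul_zero, mul_zero]
      · right
        rw [hw, hvmul _ _ hπ (mul_ne_zero hσπ0 h0), hvmul _ _ hσπ0 h0, hvπ, hvσπ]
        omega
  refine ⟨hV2, hV2', hne, ?_⟩
  rw [hInter]
  refine ⟨⟨_, _, hind0, rfl⟩, ?_⟩
  exact dual_eq_span σ v π hinv hvπ hvσ hvmul hvadd hind0 huu ht0 htv hs

end main

section merge
variable (σ : F →+* F) (π : F) (v : F → ℤ)
variable (hinv : ∀ x, σ (σ x) = x)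
variable (hπ : π ≠ 0)
variable (hvπ : v π = 1)
variable (hvσ : ∀ x, v (σ x) = v x)
variable (hvmul : ∀ x y : F, x ≠ 0 → y ≠ 0 → v (x * y) = v x + v y)
variable (hvadd : ∀ x y : F, x ≠ 0 → y ≠ 0 → x + y ≠ 0 → min (v x) (v y) ≤ v (x + y))

include hπ in
lemma zpow_collapse {a b c : ℤ} (h : a + b = c) : (π : F) ^ a * π ^ b = π ^ c := by
  rw [← zpow_add₀ hπ, h]

include hπ hvmul in
lemma unscale_indep {b w : F × F} {n : ℤ}
    (hind : LinearIndependent F ![(π ^ (-n)) • b, w]) :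
    LinearIndependent F ![b, w] := by
  have h := pair_smul_indep hind (zpow_ne_zero n hπ) (one_ne_zero (α := F))
  have e : (π ^ n) • ((π ^ (-n)) • b) = b := by
    rw [zsmul_combine π hπ, show n + -n = 0 by ring, zpow_zero, one_smul]
  rwa [e, one_smul] at h

include hinv hπ hvπ hvσ hvmul hvadd in
lemma merge_span {b w w' : F × F} {n n' : ℤ} (hbb : herm σ b b = 0)
    (hind : LinearIndependent F ![(π ^ (-n)) • b, w])
    (hind' : LinearIndependent F ![(π ^ (-n')) • b, w'])
    (hT0 : herm σ b w ≠ 0) (hT : v (herm σ b w) = n - 1)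
    (hT0' : herm σ b w' ≠ 0) (hT' : v (herm σ b w') = n' - 1) :
    ∃ s t : ℕ, n + (s : ℤ) = n' + (t : ℤ) ∧
      spanL v ((π ^ (-(n + (s : ℤ)))) • b) ((π ^ (s : ℤ)) • w)
        = spanL v ((π ^ (-(n' + (t : ℤ)))) • b) ((π ^ (t : ℤ)) • w') := by
  have hvzp : ∀ k : ℤ, v (π ^ k) = k := v_zpow v π hπ hvπ hvmul
  have hindb : LinearIndependent F ![b, w] := unscale_indep π v hπ hvmul hind
  have hindb' : LinearIndependent F ![b, w'] := unscale_indep π v hπ hvmul hind'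
  obtain ⟨c1, c2, hw'⟩ := exists_coords hindb w'
  have hc2 : c2 ≠ 0 := by
    rintro rfl
    rw [LinearIndependent.pair_iff] at hindb'
    have : c1 • b + (-1 : F) • w' = 0 := by
      rw [hw']; module
    have := (hindb' c1 (-1) this).2
    norm_num at this
  have hσc2 : σ c2 ≠ 0 := fun h => hc2 (by rw [← hinv c2, h, map_zero])
  -- v c2 = n' - n
  have hbw' : herm σ b w' = σ c2 * herm σ b w := by
    rw [hw', herm_add_right, herm_smul_right, herm_smul_right, hbb, mul_zero, zero_add]
  have hvc2 : v c2 = n' - n := by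
    have := hvmul (σ c2) (herm σ b w) hσc2 hT0
    rw [← hbw', hT', hvσ, hT] at this
    omega
  -- choose the index
  set K : ℤ := (n.natAbs : ℤ) + (n'.natAbs : ℤ) + ((v c1).natAbs : ℤ) + 1 with hK
  have hK0 : 0 ≤ K := by positivity
  have hKt : 0 ≤ K + n - n' := by omega
  refine ⟨K.toNat, (K + n - n').toNat, ?_, ?_⟩
  · omega
  set sz : ℤ := (K.toNat : ℤ) with hsz
  set tz : ℤ := ((K + n - n').toNat : ℤ) with htz
  have hszK : sz = K := Int.toNat_of_nonneg hK0
  have htzK : tz = K + n - n' := Int.toNat_of_nonneg hKt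
  have hOv : ∀ x : F, 0 ≤ v x → inO v x := fun x h => Or.inr h
  -- the four generators
  apply le_antisymm
  · apply spanL_subset v hvmul hvadd
    · -- b generator of LHS in RHS
      have e : (π ^ (-(n + sz))) • b = (π ^ (-(n' + tz))) • b := by
        congr 2
        omega
      rw [e]
      exact mem_spanL_left v hvmul _ _
    · -- π^sz • w ∈ RHS
      have hw2 : w = (-(c1 * c2⁻¹)) • b + c2⁻¹ • w' := by
        have h' : (-(c1 * c2⁻¹)) • b + c2⁻¹ • (c1 • b + c2 • w) = w := by
          rw [smul_add, smul_smul, smul_smul, inv_mul_cancel₀ hc2]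
          module
        rw [hw']
        exact h'.symm
      have hBL : (π ^ sz) • w = (π ^ sz * (-(c1 * c2⁻¹))) • b + (π ^ sz * c2⁻¹) • w' := by
        rw [hw2]
        module
      have s3 : (-(c1 * c2⁻¹) * π ^ (sz + n' + tz)) * π ^ (-(n' + tz)) = π ^ sz * (-(c1 * c2⁻¹)) := by
        rw [mul_assoc, zpow_collapse π hπ (show sz + n' + tz + -(n' + tz) = sz by ring)]
        ring
      have s4 : (π ^ (sz - tz) * c2⁻¹) * π ^ tz = π ^ sz * c2⁻¹ := by
        rw [mul_right_comm, zpow_collapse π hπ (show sz - tz + tz = sz by ring)]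
      refine ⟨-(c1 * c2⁻¹) * π ^ (sz + n' + tz), π ^ (sz - tz) * c2⁻¹, ?_, ?_, ?_⟩
      · by_cases hc1 : c1 = 0
        · left; simp [hc1]
        · apply hOv
          have hcc : c1 * c2⁻¹ ≠ 0 := mul_ne_zero hc1 (inv_ne_zero hc2)
          rw [hvmul _ _ (neg_ne_zero.mpr hcc) (zpow_ne_zero _ hπ), v_neg v hvmul _ hcc,
            hvmul _ _ hc1 (inv_ne_zero hc2), v_inv v hvmul _ hc2, hvzp]
          omega
      · apply hOv
        rw [hvmul _ _ (zpow_ne_zero _ hπ) (inv_ne_zero hc2), v_inv v hvmul _ hc2, hvzp]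
        omega
      · rw [smul_smul, smul_smul, s3, s4]
        exact hBL
  · apply spanL_subset v hvmul hvadd
    · have e : (π ^ (-(n' + tz))) • b = (π ^ (-(n + sz))) • b := by
        congr 2
        omega
      rw [e]
      exact mem_spanL_left v hvmul _ _
    · -- π^tz • w' ∈ LHS
      have hDL : (π ^ tz) • w' = (π ^ tz * c1) • b + (π ^ tz * c2) • w := by
        rw [hw']
        module
      have s1 : (c1 * π ^ (tz + n + sz)) * π ^ (-(n + sz)) = π ^ tz * c1 := by
        rw [mul_assoc, zpow_collapse π hπ (show tz + n + sz + -(n + sz) = tz by ring)]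
        ring
      have s2 : (π ^ (tz - sz) * c2) * π ^ sz = π ^ tz * c2 := by
        rw [mul_right_comm, zpow_collapse π hπ (show tz - sz + sz = tz by ring)]
      refine ⟨c1 * π ^ (tz + n + sz), π ^ (tz - sz) * c2, ?_, ?_, ?_⟩
      · by_cases hc1 : c1 = 0
        · left; simp [hc1]
        · apply hOv
          rw [hvmul _ _ hc1 (zpow_ne_zero _ hπ), hvzp]
          omega
      · apply hOv
        rw [hvmul _ _ (zpow_ne_zero _ hπ) hc2, hvzp]
        omega
      · rw [smul_smul, smul_smul, s1, s2]
        exact hDL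

end merge

theorem statement9
    (σ : F →+* F) (π : F) (v : F → ℤ)
    (hinv : ∀ x, σ (σ x) = x)
    (hσπ : σ π = -π)
    (hπ : π ≠ 0)
    (h2 : (2 : F) ≠ 0)
    (hvπ : v π = 1)
    (hv2 : v (2 : F) = 0)
    (hvσ : ∀ x, v (σ x) = v x)
    (hvmul : ∀ x y : F, x ≠ 0 → y ≠ 0 → v (x * y) = v x + v y)
    (hvadd : ∀ x y : F, x ≠ 0 → y ≠ 0 → x + y ≠ 0 → min (v x) (v y) ≤ v (x + y))
    (heven : ∀ x : F, σ x = x → x ≠ 0 → Even (v x))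
    (b : F × F) (hb0 : b ≠ 0) (hiso : herm σ b b = 0)
    (Λ Λ' : Set (F × F)) (hΛ : IsVertex2 σ π v Λ) (hΛ' : IsVertex2 σ π v Λ') :
    ∃ (s t : ℕ) (M M' : ℕ → Set (F × F)),
      M 0 = Λ ∧ M' 0 = Λ' ∧ M s = M' t ∧
      (∀ i < s, AdjV σ π v (M i) (M (i + 1))) ∧
      (∀ j < t, AdjV σ π v (M' j) (M' (j + 1))) ∧
      (∀ i < s, ∀ m : ℤ, nIs π b (M i) m → nIs π b (M (i + 1)) (m + 1)) ∧
      (∀ j < t, ∀ m : ℤ, nIs π b (M' j) m → nIs π b (M' (j + 1)) (m + 1)) := by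
  have hvzp : ∀ k : ℤ, v (π ^ k) = k := v_zpow v π hπ hvπ hvmul
  -- normal form for Λ
  obtain ⟨⟨u0, w0, hind0, hEq0⟩, hdual⟩ := hΛ
  obtain ⟨n, w, hindn, hspan⟩ := normal_form v π hπ hvπ hvmul hvadd hind0 hb0
  have hΛeq : Λ = spanL v ((π ^ (-n)) • b) w := hEq0.trans hspan
  have huu : herm σ ((π ^ (-n)) • b) ((π ^ (-n)) • b) = 0 := by
    rw [herm_smul_left, herm_smul_right, hiso, mul_zero, mul_zero]
  have hdual1 : dualL σ v (spanL v ((π ^ (-n)) • b) w)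
      = (fun x => π • x) '' (spanL v ((π ^ (-n)) • b) w) := by
    rw [← hΛeq]; exact hdual
  obtain ⟨ht0, htv, hS⟩ :=
    gram_of_vertex2 σ v π hinv hπ hvπ hvσ hvmul hvadd hindn huu heven hdual1
  have hsplit : herm σ ((π ^ (-n)) • b) w = π ^ (-n) * herm σ b w := herm_smul_left σ _ _ _
  have hT0 : herm σ b w ≠ 0 := by
    intro h; apply ht0; rw [hsplit, h, mul_zero]
  have hT : v (herm σ b w) = n - 1 := by
    rw [hsplit, hvmul _ _ (zpow_ne_zero _ hπ) hT0, hvzp] at htv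
    omega
  -- normal form for Λ'
  obtain ⟨⟨u0', w0', hind0', hEq0'⟩, hdual'⟩ := hΛ'
  obtain ⟨n', w', hindn', hspan'⟩ := normal_form v π hπ hvπ hvmul hvadd hind0' hb0
  have hΛeq' : Λ' = spanL v ((π ^ (-n')) • b) w' := hEq0'.trans hspan'
  have huu' : herm σ ((π ^ (-n')) • b) ((π ^ (-n')) • b) = 0 := by
    rw [herm_smul_left, herm_smul_right, hiso, mul_zero, mul_zero]
  have hdual1' : dualL σ v (spanL v ((π ^ (-n')) • b) w')
      = (fun x => π • x) '' (spanL v ((π ^ (-n')) • b) w') := by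
    rw [← hΛeq']; exact hdual'
  obtain ⟨ht0', htv', hS'⟩ :=
    gram_of_vertex2 σ v π hinv hπ hvπ hvσ hvmul hvadd hindn' huu' heven hdual1'
  have hsplit' : herm σ ((π ^ (-n')) • b) w' = π ^ (-n') * herm σ b w' := herm_smul_left σ _ _ _
  have hT0' : herm σ b w' ≠ 0 := by
    intro h; apply ht0'; rw [hsplit', h, mul_zero]
  have hT' : v (herm σ b w') = n' - 1 := by
    rw [hsplit', hvmul _ _ (zpow_ne_zero _ hπ) hT0', hvzp] at htv'
    omega
  -- merge point
  obtain ⟨s, t, hst, hspanEq⟩ :=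
    merge_span σ π v hinv hπ hvπ hvσ hvmul hvadd hiso hindn hindn' hT0 hT hT0' hT'
  refine ⟨s, t,
    fun i => spanL v ((π ^ (-(n + (i : ℤ)))) • b) ((π ^ (i : ℤ)) • w),
    fun j => spanL v ((π ^ (-(n' + (j : ℤ)))) • b) ((π ^ (j : ℤ)) • w'),
    ?_, ?_, ?_, ?_, ?_, ?_, ?_⟩
  · show spanL v ((π ^ (-(n + ((0 : ℕ) : ℤ)))) • b) ((π ^ ((0 : ℕ) : ℤ)) • w) = Λ
    rw [hΛeq]
    norm_num
  · show spanL v ((π ^ (-(n' + ((0 : ℕ) : ℤ)))) • b) ((π ^ ((0 : ℕ) : ℤ)) • w') = Λ'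
    rw [hΛeq']
    norm_num
  · exact hspanEq
  · intro i hi
    have ec : ((i + 1 : ℕ) : ℤ) = (i : ℤ) + 1 := by push_cast; ring
    have h := level_adj σ π v hinv hσπ hπ hvπ hvσ hvmul hvadd hiso hindn hT0 hT hS
      (i : ℤ) (by positivity)
    show AdjV σ π v _ (spanL v ((π ^ (-(n + ((i + 1 : ℕ) : ℤ)))) • b) ((π ^ ((i + 1 : ℕ) : ℤ)) • w))
    rw [ec]
    exact h
  · intro j hj
    have ec : ((j + 1 : ℕ) : ℤ) = (j : ℤ) + 1 := by push_cast; ring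
    have h := level_adj σ π v hinv hσπ hπ hvπ hvσ hvmul hvadd hiso hindn' hT0' hT' hS'
      (j : ℤ) (by positivity)
    show AdjV σ π v _ (spanL v ((π ^ (-(n' + ((j + 1 : ℕ) : ℤ)))) • b) ((π ^ ((j + 1 : ℕ) : ℤ)) • w'))
    rw [ec]
    exact h
  · intro i hi m hm
    have ec : ((i + 1 : ℕ) : ℤ) = (i : ℤ) + 1 := by push_cast; ring
    obtain ⟨_, _, hnis⟩ := level_vertex2 σ π v hinv hπ hvπ hvσ hvmul hvadd hiso hindn hT0 hT hS
      (i : ℤ) (by positivity)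
    obtain ⟨_, _, hnis'⟩ := level_vertex2 σ π v hinv hπ hvπ hvσ hvmul hvadd hiso hindn hT0 hT hS
      ((i : ℤ) + 1) (by positivity)
    have hmeq : m = n + (i : ℤ) := (hm.unique hnis)
    subst hmeq
    show nIs π b (spanL v ((π ^ (-(n + ((i + 1 : ℕ) : ℤ)))) • b) ((π ^ ((i + 1 : ℕ) : ℤ)) • w)) _
    rw [ec]
    rw [show n + (i : ℤ) + 1 = n + ((i : ℤ) + 1) by ring]
    exact hnis'
  · intro j hj m hm
    have ec : ((j + 1 : ℕ) : ℤ) = (j : ℤ) + 1 := by push_cast; ring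
    obtain ⟨_, _, hnis⟩ := level_vertex2 σ π v hinv hπ hvπ hvσ hvmul hvadd hiso hindn' hT0' hT' hS'
      (j : ℤ) (by positivity)
    obtain ⟨_, _, hnis'⟩ := level_vertex2 σ π v hinv hπ hvπ hvσ hvmul hvadd hiso hindn' hT0' hT' hS'
      ((j : ℤ) + 1) (by positivity)
    have hmeq : m = n' + (j : ℤ) := (hm.unique hnis)
    subst hmeq
    show nIs π b (spanL v ((π ^ (-(n' + ((j + 1 : ℕ) : ℤ)))) • b) ((π ^ ((j + 1 : ℕ) : ℤ)) • w')) _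
    rw [ec]
    rw [show n' + (j : ℤ) + 1 = n' + ((j : ℤ) + 1) by ring]
    exact hnis'
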